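/- If there exists an optimal incentive-compatible platform policy, then there exists an optimal incentive-compatible platform policy that is lowest-type-targeting, obtained by finitely many applications of the splitting construction, each preserving x^T, α^T, the sender's truthful utility value (hence incentive-compatibility), and the platform's utility. -/

import Mathlib

open Finset

/-- A platform policy: a truthful posterior `xT` with weight `alphaT`, and `m` non-truthful
posteriors `x i` with weights `alpha i`. -/
structure Policy (n : ℕ) where
  m : ℕ
  alphaT : ℝ
  alpha : Fin m → ℝ
  xT : Fin n → ℝ
  x : Fin m → Fin n → ℝ

/-- Bayes-plausibility with respect to the prior `xstar`. -/
def BP (n : ℕ) (xstar : Fin n → ℝ) (σ : Policy n) : Prop :=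
  0 ≤ σ.alphaT ∧ (∀ i, 0 ≤ σ.alpha i) ∧ σ.alphaT + ∑ i, σ.alpha i = 1 ∧
    (∀ j, 0 ≤ σ.xT j) ∧ (∑ j, σ.xT j = 1) ∧
    (∀ i j, 0 ≤ σ.x i j) ∧ (∀ i, ∑ j, σ.x i j = 1) ∧
    (∀ j, σ.alphaT * σ.xT j + ∑ i, σ.alpha i * σ.x i j = xstar j)

/-- The sender's one-shot utility from lying probability `p` against distribution `w`. -/
noncomputable def USone (n : ℕ) (θ : Fin n → ℝ) (μ : ℝ) (p : ℝ) (w : Fin n → ℝ) : ℝ :=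
  ∑ j, w j * (if p ≤ μ / (1 - μ) * θ j then (1 : ℝ) else 0) * (μ + (1 - μ) * p)

/-- Sender's truthful utility `V(σ) = U_S(σ, p_T)`. -/
noncomputable def USpol (n : ℕ) (θ : Fin n → ℝ) (μ : ℝ) (pstar : (Fin n → ℝ) → ℝ)
    (σ : Policy n) : ℝ :=
  σ.alphaT * μ + ∑ i, σ.alpha i * USone n θ μ (pstar (σ.x i)) (σ.x i)

/-- Platform's utility under truthful play. -/
noncomputable def UPpol (n : ℕ) (θ : Fin n → ℝ) (μ : ℝ) (pstar : (Fin n → ℝ) → ℝ)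
    (σ : Policy n) : ℝ :=
  σ.alphaT * μ * (∑ j, σ.xT j * θ j) + ∑ i, σ.alpha i * ∑ j, σ.x i j *
    (if pstar (σ.x i) ≤ μ / (1 - μ) * θ j then (1 : ℝ) else 0) *
      (μ * θ j - (1 - μ) * pstar (σ.x i))

/-- Lowest-type-targeting. -/
def LTT (n : ℕ) (θ : Fin n → ℝ) (μ : ℝ) (pstar : (Fin n → ℝ) → ℝ) (σ : Policy n) : Prop :=
  ∀ i, ∃ j : Fin n, 0 < σ.x i j ∧ (∀ k, 0 < σ.x i k → j ≤ k) ∧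
    pstar (σ.x i) = μ / (1 - μ) * θ j

/-- Incentive-compatibility: the IC constraints of the characterization lemma, which depend
only on the truthful posterior `σ.xT` and the truthful value `V(σ) = USpol σ`. -/
noncomputable def ICpol (n : ℕ) (θ : Fin n → ℝ) (μ δ ubar : ℝ)
    (pstar : (Fin n → ℝ) → ℝ) (σ : Policy n) : Prop :=
  ∀ k : Fin n,
    USpol n θ μ pstar σ ≥
      (1 - δ) / δ *
          (μ / (1 - μ) *
            (((∑ j ∈ Finset.univ.filter (fun j => k ≤ j), σ.xT j) - 1) /
              ((∑ j ∈ Finset.univ.filter (fun j => k ≤ j), σ.xT j) *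
                (μ / (1 - μ) * θ k))) + 1)
        + ubar

/-!
Adding the two payoffs, a posterior `x` answered by the lie threshold `τ_l = μ θ_l / (1 - μ)`
contributes `μ ∑_{j ≥ l} x_j (1 + θ_j) ≤ μ ∑_j x_j (1 + θ_j)` to `U_P + U_S`, with equality when no
type in the support of `x` lies below `l`. By Bayes plausibility, `U_P + U_S ≤ μ E_{x*}[1 + θ]`
for every policy, with equality for lowest-type-targeting ones. So it suffices to split every
non-truthful posterior into lowest-type-targeted posteriors without changing the sender's value:
`x^T`, `α^T` and `V` (hence incentive compatibility) are kept, `U_P` can only grow, and optimality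
of `σ₀` forces equality.

The sender's value at `w` is `max_l μ (1 + θ_l) P_w(type ≥ l)`. The splitting is built by
induction on the support: split the part of `w` above its lowest type `j`, then merge a fraction of
every piece with mass at `j`, in the proportion that makes `j` the optimal threshold again.
-/

section LowestTargeting

variable {ι : Type*} [Fintype ι] [LinearOrder ι]

def tailMass (l : ι) : (ι → ℝ) →ₗ[ℝ] ℝ := ∑ j with l ≤ j, LinearMap.proj j

lemma tailMass_apply (l : ι) (w : ι → ℝ) : tailMass l w = ∑ j with l ≤ j, w j := by
  simp [tailMass]

lemma tailMass_eq_sum {l : ι} {w : ι → ℝ} (hw : ∀ k, w k ≠ 0 → l ≤ k) :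
    tailMass l w = ∑ k, w k := by
  rw [tailMass_apply, sum_filter]
  refine sum_congr rfl fun k _ => ?_
  by_cases hk : w k = 0 <;> simp [hk, hw k]

lemma tailMass_single (l j : ι) : tailMass l (Pi.single j 1) = if l ≤ j then 1 else 0 := by
  simp [tailMass_apply, Pi.single_apply, sum_ite_eq']

-- For `M l = μ (1 + θ l)` this is the sender's value of the best lie at `w`
-- (`USone_pstar_eq_peakValue`).
noncomputable def peakValue (M w : ι → ℝ) : ℝ := ⨆ l, M l * tailMass l w

variable {M : ι → ℝ}

lemma le_peakValue (w : ι → ℝ) (l : ι) : M l * tailMass l w ≤ peakValue M w :=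
  le_ciSup (f := fun l => M l * tailMass l w) (Set.finite_range _).bddAbove l

lemma peakValue_le [Nonempty ι] {w : ι → ℝ} {b : ℝ} (h : ∀ l, M l * tailMass l w ≤ b) :
    peakValue M w ≤ b :=
  ciSup_le h

lemma exists_peakValue_eq [Nonempty ι] (w : ι → ℝ) : ∃ l, peakValue M w = M l * tailMass l w :=
  exists_eq_ciSup_of_finite.imp fun _ h => h.symm

lemma peakValue_zero : peakValue M 0 = 0 := by
  simp [peakValue]

lemma peakValue_smul_single_add (hM : Monotone M) {j : ι} (hMj : 0 ≤ M j) {a : ℝ} (ha : 0 ≤ a)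
    {R : ι → ℝ} (hR : 0 ≤ R) (hRj : ∀ k, R k ≠ 0 → j < k) :
    peakValue M (a • Pi.single j 1 + R) = max (M j * (a + ∑ k, R k)) (peakValue M R) := by
  have : Nonempty ι := ⟨j⟩
  have hmass : 0 ≤ a + ∑ k, R k := add_nonneg ha (sum_nonneg fun k _ => hR k)
  have hlow : ∀ l ≤ j, tailMass l (a • Pi.single j 1 + R) = a + ∑ k, R k := fun l hl => by
    rw [map_add, map_smul, tailMass_single, if_pos hl, smul_eq_mul, mul_one,
      tailMass_eq_sum fun k hk => hl.trans (hRj k hk).le]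
  have hhigh : ∀ l, j < l → tailMass l (a • Pi.single j 1 + R) = tailMass l R := fun l hl => by
    rw [map_add, map_smul, tailMass_single, if_neg hl.not_ge, smul_zero, zero_add]
  apply le_antisymm
  · refine peakValue_le fun l => ?_
    rcases le_or_gt l j with hl | hl
    · rw [hlow l hl]
      exact le_max_of_le_left (mul_le_mul_of_nonneg_right (hM hl) hmass)
    · rw [hhigh l hl]
      exact le_max_of_le_right (le_peakValue R l)
  · have hj := le_peakValue (M := M) (a • Pi.single j 1 + R) j
    rw [hlow j le_rfl] at hj
    refine max_le hj ?_
    obtain ⟨l, hl⟩ := exists_peakValue_eq (M := M) R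
    rcases le_or_gt l j with hlj | hlj
    · rw [hl, tailMass_eq_sum fun k hk => hlj.trans (hRj k hk).le]
      refine le_trans ?_ hj
      exact mul_le_mul (hM hlj) (le_add_of_nonneg_left ha) (sum_nonneg fun k _ => hR k) hMj
    · rw [hl, ← hhigh l hlj]
      exact le_peakValue _ l

-- With `M l = μ (1 + θ l)`, the posteriors whose best lie targets their lowest type `j`
-- (`IsLowestTargeted.pstar_eq`).
structure IsLowestTargeted (M : ι → ℝ) (j : ι) (v : ι → ℝ) : Prop where
  mem : v ∈ stdSimplex ℝ ι
  pos : 0 < v j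
  le_of_ne_zero : ∀ k, v k ≠ 0 → j ≤ k
  tail_le : ∀ l, M l * tailMass l v ≤ M j

lemma IsLowestTargeted.peakValue_eq {j : ι} {v : ι → ℝ} (h : IsLowestTargeted M j v) :
    peakValue M v = M j := by
  have : Nonempty ι := ⟨j⟩
  refine le_antisymm (peakValue_le h.tail_le) ?_
  simpa [tailMass_eq_sum h.le_of_ne_zero, h.mem.2] using le_peakValue (M := M) v j

lemma isLowestTargeted_of_lt (hM : Monotone M) {j : ι} {v : ι → ℝ} (hv : v ∈ stdSimplex ℝ ι)
    (hpos : 0 < v j) (hsupp : ∀ k, v k ≠ 0 → j ≤ k)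
    (h : ∀ l, j < l → M l * tailMass l v ≤ M j) : IsLowestTargeted M j v where
  mem := hv
  pos := hpos
  le_of_ne_zero := hsupp
  tail_le l := by
    rcases le_or_gt l j with hl | hl
    · rw [tailMass_eq_sum fun k hk => hl.trans (hsupp k hk), hv.2, mul_one]
      exact hM hl
    · exact h l hl

lemma isLowestTargeted_single (hM : Monotone M) {j : ι} (hMj : 0 ≤ M j) :
    IsLowestTargeted M j (Pi.single j 1) :=
  isLowestTargeted_of_lt hM (single_mem_stdSimplex ℝ j) (by simp)
    (fun k hk => by
      rcases eq_or_ne k j with rfl | h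
      exacts [le_rfl, absurd (Pi.single_eq_of_ne h 1) hk])
    fun l hl => by rw [tailMass_single, if_neg hl.not_ge, mul_zero]; exact hMj

lemma IsLowestTargeted.mix (hM : StrictMono M) (hMpos : ∀ l, 0 < M l) {i j : ι} {v : ι → ℝ}
    (h : IsLowestTargeted M i v) (hji : j < i) :
    IsLowestTargeted M j ((M j / M i) • v + (1 - M j / M i) • Pi.single j 1) := by
  have hs0 : 0 < M j / M i := div_pos (hMpos j) (hMpos i)
  have hs1 : M j / M i < 1 := (div_lt_one (hMpos i)).2 (hM hji)
  have hvj : v j = 0 := by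
    by_contra hv
    exact hji.not_ge (h.le_of_ne_zero j hv)
  refine isLowestTargeted_of_lt hM.monotone
    (convex_stdSimplex ℝ ι h.mem (single_mem_stdSimplex ℝ j) hs0.le (by linarith) (by ring))
    (by simp [hvj, hs1]) (fun k hk => ?_) (fun l hl => ?_)
  · rcases eq_or_ne k j with rfl | hkj
    · exact le_rfl
    · refine hji.le.trans (h.le_of_ne_zero k fun hv => hk ?_)
      simp [hv, Pi.single_eq_of_ne hkj]
  · rw [map_add, map_smul, map_smul, tailMass_single, if_neg hl.not_ge, smul_zero, add_zero,
      smul_eq_mul, mul_left_comm]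
    calc M j / M i * (M l * tailMass l v) ≤ M j / M i * M i :=
          mul_le_mul_of_nonneg_left (h.tail_le l) hs0.le
      _ = M j := div_mul_cancel₀ _ (hMpos i).ne'

lemma exists_mem_Icc_sub_mul_eq_max {x : ℝ} (hx : 0 ≤ x) (D : ℝ) :
    ∃ t ∈ Set.Icc (0 : ℝ) 1, x - t * D = max (x - D) 0 := by
  rcases le_or_gt D x with h | h
  · exact ⟨1, ⟨zero_le_one, le_rfl⟩, by rw [one_mul, max_eq_left (sub_nonneg.2 h)]⟩
  · have hD : 0 < D := hx.trans_lt h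
    refine ⟨x / D, ⟨div_nonneg hx hD.le, (div_le_one hD).2 h.le⟩, ?_⟩
    rw [div_mul_cancel₀ _ hD.ne', sub_self, max_eq_right (by linarith)]

-- `w` need not be normalised: the weights then sum to `∑ j, w j` (`sum_weight`).
structure LowestTargetedSplit (M w : ι → ℝ) where
  κ : Type
  [fintype : Fintype κ]
  weight : κ → ℝ
  low : κ → ι
  part : κ → ι → ℝ
  weight_nonneg : ∀ k, 0 ≤ weight k
  isLowestTargeted : ∀ k, IsLowestTargeted M (low k) (part k)
  part_eq_zero : ∀ k j, w j = 0 → part k j = 0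
  sum_weight_mul_part : ∀ j, ∑ k, weight k * part k j = w j
  sum_weight_mul_low : ∑ k, weight k * M (low k) = peakValue M w

attribute [instance] LowestTargetedSplit.fintype

namespace LowestTargetedSplit

variable {w : ι → ℝ}

lemma sum_weight (S : LowestTargetedSplit M w) : ∑ k, S.weight k = ∑ j, w j := by
  simp_rw [← S.sum_weight_mul_part]
  rw [sum_comm]
  simp [← mul_sum, (S.isLowestTargeted _).mem.2]

lemma lt_low {R : ι → ℝ} (S : LowestTargetedSplit M R) {j : ι} (hRj : ∀ k, R k ≠ 0 → j < k)
    (p : S.κ) : j < S.low p :=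
  hRj _ fun h => (S.isLowestTargeted p).pos.ne' (S.part_eq_zero p _ h)

lemma nonempty_zero : Nonempty (LowestTargetedSplit M 0) :=
  ⟨{ κ := Empty
     weight := Empty.elim
     low := Empty.elim
     part := Empty.elim
     weight_nonneg := fun k => k.elim
     isLowestTargeted := fun k => k.elim
     part_eq_zero := fun k => k.elim
     sum_weight_mul_part := fun _ => by simp
     sum_weight_mul_low := by simp [peakValue_zero] }⟩

lemma sum_merge_apply (hMpos : ∀ l, 0 < M l) {R : ι → ℝ} (S : LowestTargetedSplit M R)
    (j : ι) (t : ℝ) (k : ι) :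
    ∑ p, t * S.weight p * M (S.low p) / M j *
        (M j / M (S.low p) * S.part p k + (1 - M j / M (S.low p)) * (Pi.single j 1 : ι → ℝ) k) =
      t * R k + t * (peakValue M R - M j * ∑ i, R i) / M j * (Pi.single j 1 : ι → ℝ) k := by
  set δ : ι → ℝ := Pi.single j 1
  have hj := (hMpos j).ne'
  have hterm : ∀ p, t * S.weight p * M (S.low p) / M j *
      (M j / M (S.low p) * S.part p k + (1 - M j / M (S.low p)) * δ k) =
      t * (S.weight p * S.part p k) + t / M j * δ k * (S.weight p * M (S.low p))
        - t * δ k * S.weight p := fun p => by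
    have := (hMpos (S.low p)).ne'
    field_simp
    ring
  simp_rw [hterm]
  rw [sum_sub_distrib, sum_add_distrib, ← mul_sum, ← mul_sum, ← mul_sum,
    S.sum_weight_mul_part, S.sum_weight_mul_low, S.sum_weight]
  field_simp
  ring

theorem nonempty_smul_single_add (hM : StrictMono M) (hMpos : ∀ l, 0 < M l) {R : ι → ℝ}
    (S : LowestTargetedSplit M R) (hR : 0 ≤ R) {j : ι} (hRj : ∀ k, R k ≠ 0 → j < k) {a : ℝ}
    (ha : 0 < a) : Nonempty (LowestTargetedSplit M (a • Pi.single j 1 + R)) := by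
  have hr : 0 < M j := hMpos j
  set Φ := peakValue M R
  set D := Φ - M j * ∑ k, R k with hD
  -- Merging the fraction `t` of every piece of `R` with mass at `j` costs `t * D / M j` of that
  -- mass; taking `t` as large as `a` allows makes the value `max (M j * (a + ∑ R)) Φ`.
  obtain ⟨t, ⟨ht0, ht1⟩, ht⟩ := exists_mem_Icc_sub_mul_eq_max (mul_nonneg ha.le hr.le) D
  have hw_zero : ∀ i, (a • Pi.single j 1 + R : ι → ℝ) i = 0 → i ≠ j ∧ R i = 0 := fun i hi => by
    have hij : i ≠ j := by
      rintro rfl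
      have : R i = 0 := by_contra fun h => (hRj i h).false
      simp [this] at hi
      exact ha.ne' hi
    refine ⟨hij, ?_⟩
    simpa [Pi.single_eq_of_ne hij] using hi
  refine ⟨{
    κ := S.κ ⊕ S.κ ⊕ Unit
    weight := Sum.elim (fun p => t * S.weight p * M (S.low p) / M j)
      (Sum.elim (fun p => (1 - t) * S.weight p) fun _ => max (a * M j - D) 0 / M j)
    low := Sum.elim (fun _ => j) (Sum.elim S.low fun _ => j)
    part := Sum.elim
      (fun p => (M j / M (S.low p)) • S.part p + (1 - M j / M (S.low p)) • Pi.single j 1)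
      (Sum.elim S.part fun _ => Pi.single j 1)
    weight_nonneg := ?_
    isLowestTargeted := ?_
    part_eq_zero := ?_
    sum_weight_mul_part := ?_
    sum_weight_mul_low := ?_ }⟩
  · rintro (p | p | -)
    · exact div_nonneg (mul_nonneg (mul_nonneg ht0 (S.weight_nonneg p)) (hMpos _).le) hr.le
    · exact mul_nonneg (sub_nonneg.2 ht1) (S.weight_nonneg p)
    · exact div_nonneg (le_max_right _ _) hr.le
  · rintro (p | p | -)
    · exact (S.isLowestTargeted p).mix hM hMpos (S.lt_low hRj p)
    · exact S.isLowestTargeted p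
    · exact isLowestTargeted_single hM.monotone hr.le
  · rintro (p | p | -) i hi <;> obtain ⟨hij, hRi⟩ := hw_zero i hi
    · simp [Pi.single_eq_of_ne hij, S.part_eq_zero p i hRi]
    · exact S.part_eq_zero p i hRi
    · exact Pi.single_eq_of_ne hij 1
  · intro k
    simp only [Fintype.sum_sum_type, Fintype.sum_unique, Sum.elim_inl, Sum.elim_inr,
      Pi.add_apply, Pi.smul_apply, smul_eq_mul]
    rw [S.sum_merge_apply hMpos]
    simp_rw [mul_assoc (1 - t), ← mul_sum, S.sum_weight_mul_part]
    rw [← ht, hD]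
    field_simp
    ring
  · have hpeak : peakValue M (a • Pi.single j 1 + R) = Φ + max (a * M j - D) 0 := by
      rw [peakValue_smul_single_add hM.monotone hr.le ha.le hR hRj, ← max_add_add_left,
        add_zero, hD]
      congr 1
      ring
    have hterm : ∀ p, t * S.weight p * M (S.low p) / M j * M j =
        t * (S.weight p * M (S.low p)) := fun p => by
      field_simp
    simp only [Fintype.sum_sum_type, Fintype.sum_unique, Sum.elim_inl, Sum.elim_inr, hterm,
      mul_assoc (1 - t), ← mul_sum, S.sum_weight_mul_low, div_mul_cancel₀ _ hr.ne', hpeak]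
    ring

theorem nonempty (hM : StrictMono M) (hMpos : ∀ l, 0 < M l) {w : ι → ℝ} (hw : 0 ≤ w) :
    Nonempty (LowestTargetedSplit M w) := by
  suffices ∀ s : Finset ι, ∀ w : ι → ℝ, 0 ≤ w → (∀ k, w k ≠ 0 → k ∈ s) →
      Nonempty (LowestTargetedSplit M w) from this univ w hw fun k _ => mem_univ k
  intro s
  induction s using Finset.strongInduction with
  | H s ih =>
    intro w hw hws
    obtain rfl | hw0 := eq_or_ne w 0
    · exact nonempty_zero
    obtain ⟨i, hi⟩ := Function.ne_iff.1 hw0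
    obtain ⟨j, hj, hjmin⟩ := (univ.filter fun k => w k ≠ 0).exists_min_image id
      ⟨i, by simpa using hi⟩
    simp only [mem_filter, mem_univ, true_and, id] at hj hjmin
    set R := Function.update w j 0
    have hR : 0 ≤ R := fun k => by
      rcases eq_or_ne k j with rfl | h
      · simp [R]
      · simpa [R, h] using hw k
    have hRj : ∀ k, R k ≠ 0 → j < k := fun k hk => by
      rcases eq_or_ne k j with rfl | h
      · simp [R] at hk
      · exact lt_of_le_of_ne (hjmin k (by simpa [R, h] using hk)) h.symm
    have hwR : w = w j • Pi.single j 1 + R := by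
      ext k
      rcases eq_or_ne k j with rfl | h <;> simp [R, *]
    obtain ⟨S⟩ := ih (s.erase j) (erase_ssubset (hws j hj)) R hR fun k hk =>
      mem_erase.2 ⟨(hRj k hk).ne', hws k (by simpa [R, (hRj k hk).ne'] using hk)⟩
    rw [hwR]
    exact S.nonempty_smul_single_add hM hMpos hR hRj (lt_of_le_of_ne (hw j) (Ne.symm hj))

end LowestTargetedSplit

end LowestTargeting

section Model

variable {n : ℕ} {θ : Fin n → ℝ} {μ : ℝ} {pstar : (Fin n → ℝ) → ℝ}

lemma strictMono_mul_one_add (hμ0 : 0 < μ) (hθ : StrictMono θ) :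
    StrictMono fun l => μ * (1 + θ l) :=
  (hθ.const_add 1).const_mul hμ0

lemma USone_threshold (hμ0 : 0 < μ) (hμ1 : μ < 1) (hθ : StrictMono θ) (l : Fin n)
    (w : Fin n → ℝ) : USone n θ μ (μ / (1 - μ) * θ l) w = μ * (1 + θ l) * tailMass l w := by
  have hc : 0 < μ / (1 - μ) := div_pos hμ0 (by linarith)
  have hgain : μ + (1 - μ) * (μ / (1 - μ) * θ l) = μ * (1 + θ l) := by
    field_simp [(by linarith : (1 : ℝ) - μ ≠ 0)]
  rw [USone, tailMass_apply, sum_filter, mul_sum]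
  refine sum_congr rfl fun j _ => ?_
  simp only [mul_le_mul_iff_of_pos_left hc, hθ.le_iff_le, hgain]
  split_ifs <;> ring

def IsLowestOptimalLie (θ : Fin n → ℝ) (μ : ℝ) (pstar : (Fin n → ℝ) → ℝ) : Prop :=
  ∀ w : Fin n → ℝ, ((∀ j, 0 ≤ w j) ∧ ∑ j, w j = 1) →
    ∃ jo : Fin n, pstar w = μ / (1 - μ) * θ jo ∧
      (∀ l : Fin n, USone n θ μ (μ / (1 - μ) * θ l) w ≤ USone n θ μ (pstar w) w) ∧
      (∀ l : Fin n, USone n θ μ (μ / (1 - μ) * θ l) w = USone n θ μ (pstar w) w → jo ≤ l)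

lemma USone_pstar_eq_peakValue (hμ0 : 0 < μ) (hμ1 : μ < 1) (hθ : StrictMono θ)
    (hp : IsLowestOptimalLie θ μ pstar) {w : Fin n → ℝ}
    (hw : w ∈ stdSimplex ℝ (Fin n)) :
    USone n θ μ (pstar w) w = peakValue (fun l => μ * (1 + θ l)) w := by
  obtain ⟨jo, hjo, hmax, -⟩ := hp w hw
  have : Nonempty (Fin n) := ⟨jo⟩
  refine le_antisymm ?_ (peakValue_le fun l => ?_)
  · rw [hjo, USone_threshold hμ0 hμ1 hθ]
    exact le_peakValue (M := fun l => μ * (1 + θ l)) w jo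
  · rw [← USone_threshold hμ0 hμ1 hθ]
    exact hmax l

lemma IsLowestTargeted.pstar_eq (hμ0 : 0 < μ) (hμ1 : μ < 1) (hθ : StrictMono θ)
    (hp : IsLowestOptimalLie θ μ pstar) {j : Fin n}
    {v : Fin n → ℝ} (h : IsLowestTargeted (fun l => μ * (1 + θ l)) j v) :
    pstar v = μ / (1 - μ) * θ j := by
  obtain ⟨jo, hjo, -, hmin⟩ := hp v h.mem
  have hval : USone n θ μ (pstar v) v = μ * (1 + θ j) := by
    rw [USone_pstar_eq_peakValue hμ0 hμ1 hθ hp h.mem, h.peakValue_eq]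
  have hgain : ∀ l ≤ j, USone n θ μ (μ / (1 - μ) * θ l) v = μ * (1 + θ l) := fun l hl => by
    rw [USone_threshold hμ0 hμ1 hθ, tailMass_eq_sum fun k hk => hl.trans (h.le_of_ne_zero k hk),
      h.mem.2, mul_one]
  have hjo_le : jo ≤ j := hmin j (by rw [hgain j le_rfl, hval])
  have hjo_eq : jo = j := by
    refine le_antisymm hjo_le (not_lt.1 fun hlt => ?_)
    have := hgain jo hjo_le
    rw [← hjo, hval] at this
    exact (strictMono_mul_one_add hμ0 hθ hlt).ne' this
  rw [hjo, hjo_eq]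

end Model

section Refinement

variable {n : ℕ} {θ : Fin n → ℝ} {μ : ℝ} {pstar : (Fin n → ℝ) → ℝ}

noncomputable def Policy.refine (σ : Policy n) {κ : Fin σ.m → Type} [∀ i, Fintype (κ i)]
    (β : ∀ i, κ i → ℝ) (v : ∀ i, κ i → Fin n → ℝ) : Policy n where
  m := Fintype.card (Σ i, κ i)
  alphaT := σ.alphaT
  alpha t := σ.alpha ((Fintype.equivFin _).symm t).1 * β _ ((Fintype.equivFin _).symm t).2
  xT := σ.xT
  x t := v _ ((Fintype.equivFin _).symm t).2

lemma Policy.sum_refine (σ : Policy n) {κ : Fin σ.m → Type} [∀ i, Fintype (κ i)]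
    (β : ∀ i, κ i → ℝ) (v : ∀ i, κ i → Fin n → ℝ) (g : ℝ → (Fin n → ℝ) → ℝ) :
    ∑ t, g ((σ.refine β v).alpha t) ((σ.refine β v).x t) =
      ∑ i, ∑ k, g (σ.alpha i * β i k) (v i k) := by
  exact ((Fintype.equivFin _).symm.sum_comp fun s => g (σ.alpha s.1 * β s.1 s.2) (v s.1 s.2)).trans
    (Fintype.sum_sigma _)

theorem exists_refinement_LTT (hθpos : ∀ j, 0 < θ j) (hθ : StrictMono θ) (hμ0 : 0 < μ)
    (hμ1 : μ < 1) (hp : IsLowestOptimalLie θ μ pstar) {xstar : Fin n → ℝ} {σ₀ : Policy n}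
    (hBP : BP n xstar σ₀) :
    ∃ σ : Policy n, BP n xstar σ ∧ LTT n θ μ pstar σ ∧ σ.xT = σ₀.xT ∧
      σ.alphaT = σ₀.alphaT ∧ USpol n θ μ pstar σ = USpol n θ μ pstar σ₀ := by
  obtain ⟨hαT, hα, hsum, hxT0, hxT1, hx0, hx1, hmarg⟩ := hBP
  have hx : ∀ i, σ₀.x i ∈ stdSimplex ℝ (Fin n) := fun i => ⟨hx0 i, hx1 i⟩
  have hgain : ∀ l, 0 < μ * (1 + θ l) := fun l => by have := hθpos l; positivity
  let S i := (LowestTargetedSplit.nonempty (strictMono_mul_one_add hμ0 hθ) hgain (hx0 i)).some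
  have hS := σ₀.sum_refine (fun i => (S i).weight) (fun i => (S i).part)
  refine ⟨σ₀.refine (fun i => (S i).weight) (fun i => (S i).part),
    ⟨hαT, fun t => mul_nonneg (hα _) ((S _).weight_nonneg _), ?_, hxT0, hxT1,
      fun t => ((S _).isLowestTargeted _).mem.1, fun t => ((S _).isLowestTargeted _).mem.2,
      fun j => ?_⟩, fun t => ?_, rfl, rfl, ?_⟩
  · rw [hS fun a _ => a]
    simp_rw [← mul_sum, (S _).sum_weight, hx1, mul_one]
    exact hsum
  · rw [hS fun a v => a * v j]
    simp_rw [mul_assoc, ← mul_sum, (S _).sum_weight_mul_part]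
    exact hmarg j
  · set s := (Fintype.equivFin (Σ i, (S i).κ)).symm t
    have h := (S s.1).isLowestTargeted s.2
    exact ⟨_, h.pos, fun k hk => h.le_of_ne_zero k hk.ne', h.pstar_eq hμ0 hμ1 hθ hp⟩
  · rw [USpol, USpol, hS fun a v => a * USone n θ μ (pstar v) v]
    congr 1
    refine sum_congr rfl fun i _ => ?_
    simp_rw [mul_assoc, ← mul_sum, USone_pstar_eq_peakValue hμ0 hμ1 hθ hp (hx i),
      ← (S i).sum_weight_mul_low]
    refine congrArg _ (sum_congr rfl fun k _ => ?_)
    have h := (S i).isLowestTargeted k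
    rw [USone_pstar_eq_peakValue hμ0 hμ1 hθ hp h.mem, h.peakValue_eq]

end Refinement

section PlatformValue

variable {n : ℕ} {θ : Fin n → ℝ} {μ : ℝ} {pstar : (Fin n → ℝ) → ℝ}

theorem UPpol_add_USpol {xstar : Fin n → ℝ} {σ : Policy n} (hBP : BP n xstar σ) :
    UPpol n θ μ pstar σ + USpol n θ μ pstar σ =
      μ * ∑ j, xstar j * (1 + θ j) - μ * ∑ i, σ.alpha i * ∑ j, σ.x i j *
        (if pstar (σ.x i) ≤ μ / (1 - μ) * θ j then 0 else 1) * (1 + θ j) := by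
  obtain ⟨-, -, -, -, hxT1, -, -, hmarg⟩ := hBP
  have hprior : ∑ j, xstar j * (1 + θ j) = σ.alphaT * (1 + ∑ j, σ.xT j * θ j) +
      ∑ i, σ.alpha i * ∑ j, σ.x i j * (1 + θ j) := by
    simp only [← hmarg, add_mul, sum_add_distrib, sum_mul, mul_sum]
    rw [sum_comm]
    simp only [mul_assoc, ← mul_sum, mul_add, mul_one, sum_add_distrib, hxT1]
  have hposterior : ∀ i, σ.alpha i * ∑ j, σ.x i j *
      (if pstar (σ.x i) ≤ μ / (1 - μ) * θ j then 1 else 0) *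
        (μ * θ j - (1 - μ) * pstar (σ.x i)) + σ.alpha i * USone n θ μ (pstar (σ.x i)) (σ.x i) =
      μ * (σ.alpha i * ∑ j, σ.x i j * (1 + θ j)) - μ * (σ.alpha i * ∑ j, σ.x i j *
        (if pstar (σ.x i) ≤ μ / (1 - μ) * θ j then 0 else 1) * (1 + θ j)) := fun i => by
    simp only [USone, ← mul_add, ← sum_add_distrib, mul_sum, ← sum_sub_distrib]
    refine sum_congr rfl fun j _ => ?_
    split_ifs <;> ring
  have hsum := sum_congr rfl fun i (_ : i ∈ univ) => hposterior i
  rw [sum_add_distrib, sum_sub_distrib, ← mul_sum, ← mul_sum] at hsum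
  rw [UPpol, USpol, hprior]
  linear_combination hsum

theorem UPpol_add_USpol_le (hμ : 0 ≤ μ) (hθ : ∀ j, 0 ≤ 1 + θ j) {xstar : Fin n → ℝ}
    {σ : Policy n} (hBP : BP n xstar σ) :
    UPpol n θ μ pstar σ + USpol n θ μ pstar σ ≤ μ * ∑ j, xstar j * (1 + θ j) := by
  rw [UPpol_add_USpol hBP]
  obtain ⟨-, hα, -, -, -, hx0, -, -⟩ := hBP
  refine sub_le_self _ (mul_nonneg hμ (sum_nonneg fun i _ => mul_nonneg (hα i)
    (sum_nonneg fun j _ => mul_nonneg (mul_nonneg (hx0 i j) ?_) (hθ j))))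
  split_ifs <;> norm_num

theorem UPpol_add_USpol_of_LTT (hμ0 : 0 < μ) (hμ1 : μ < 1) (hθ : Monotone θ)
    {xstar : Fin n → ℝ} {σ : Policy n} (hBP : BP n xstar σ) (hLTT : LTT n θ μ pstar σ) :
    UPpol n θ μ pstar σ + USpol n θ μ pstar σ = μ * ∑ j, xstar j * (1 + θ j) := by
  rw [UPpol_add_USpol hBP, sub_eq_self, mul_eq_zero]
  obtain ⟨-, -, -, -, -, hx0, -, -⟩ := hBP
  have hc : 0 ≤ μ / (1 - μ) := div_nonneg hμ0.le (by linarith)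
  refine Or.inr (sum_eq_zero fun i _ => ?_)
  obtain ⟨j, -, hmin, hpj⟩ := hLTT i
  refine mul_eq_zero_of_right _ (sum_eq_zero fun k _ => ?_)
  obtain h | h := (hx0 i k).eq_or_lt
  · rw [← h, zero_mul, zero_mul]
  · rw [if_pos (hpj ▸ mul_le_mul_of_nonneg_left (hθ (hmin k h)) hc), mul_zero, zero_mul]

end PlatformValue

theorem stmt16_general (n : ℕ) (θ : Fin n → ℝ) (μ δ ubar : ℝ) (xstar : Fin n → ℝ)
    (pstar : (Fin n → ℝ) → ℝ)
    (hθpos : ∀ j, 0 < θ j) (hθmono : StrictMono θ) (hμ0 : 0 < μ) (hμ1 : μ < 1)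
    (hpstar : ∀ w : Fin n → ℝ, ((∀ j, 0 ≤ w j) ∧ ∑ j, w j = 1) →
      ∃ jo : Fin n, pstar w = μ / (1 - μ) * θ jo ∧
        (∀ l : Fin n, USone n θ μ (μ / (1 - μ) * θ l) w ≤ USone n θ μ (pstar w) w) ∧
        (∀ l : Fin n, USone n θ μ (μ / (1 - μ) * θ l) w = USone n θ μ (pstar w) w →
          jo ≤ l))
    (σ₀ : Policy n) (hσ₀BP : BP n xstar σ₀) (hσ₀IC : ICpol n θ μ δ ubar pstar σ₀)
    (hσ₀opt : ∀ σ' : Policy n, BP n xstar σ' → ICpol n θ μ δ ubar pstar σ' →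
      UPpol n θ μ pstar σ' ≤ UPpol n θ μ pstar σ₀) :
    ∃ σ : Policy n, BP n xstar σ ∧ ICpol n θ μ δ ubar pstar σ ∧
      LTT n θ μ pstar σ ∧
      σ.xT = σ₀.xT ∧ σ.alphaT = σ₀.alphaT ∧
      USpol n θ μ pstar σ = USpol n θ μ pstar σ₀ ∧
      UPpol n θ μ pstar σ = UPpol n θ μ pstar σ₀ ∧
      (∀ σ' : Policy n, BP n xstar σ' → ICpol n θ μ δ ubar pstar σ' →
        UPpol n θ μ pstar σ' ≤ UPpol n θ μ pstar σ) := by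
  obtain ⟨σ, hBP, hLTT, hxT, hαT, hUS⟩ :=
    exists_refinement_LTT hθpos hθmono hμ0 hμ1 hpstar hσ₀BP
  have hIC : ICpol n θ μ δ ubar pstar σ := fun k => by
    rw [hUS, hxT]
    exact hσ₀IC k
  have hUP : UPpol n θ μ pstar σ = UPpol n θ μ pstar σ₀ := by
    refine le_antisymm (hσ₀opt σ hBP hIC) ?_
    have h₀ := UPpol_add_USpol_le (pstar := pstar) hμ0.le
      (fun j => (add_pos one_pos (hθpos j)).le) hσ₀BP
    have h := UPpol_add_USpol_of_LTT hμ0 hμ1 hθmono.monotone hBP hLTT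
    linarith
  exact ⟨σ, hBP, hIC, hLTT, hxT, hαT, hUS, hUP, fun σ' h₁ h₂ => hUP ▸ hσ₀opt σ' h₁ h₂⟩

/-- If an optimal incentive-compatible policy exists, then there is an optimal
incentive-compatible policy that is lowest-type-targeting, with the same truthful posterior,
truthful weight, sender truthful utility (hence incentive-compatibility) and platform
utility as the given optimal policy. -/
theorem stmt16 (n : ℕ) (θ : Fin n → ℝ) (μ δ ubar : ℝ) (xstar : Fin n → ℝ)
    (pstar : (Fin n → ℝ) → ℝ)
    (hθpos : ∀ j, 0 < θ j) (hθmono : StrictMono θ) (hμ0 : 0 < μ) (hμ1 : μ < 1)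
    (hδ0 : 0 < δ) (hδ1 : δ < 1)
    (hτ : ∀ j, μ / (1 - μ) * θ j ≤ 1)
    (hxstar : ∀ j, 0 ≤ xstar j) (hxstar1 : ∑ j, xstar j = 1)
    (hpstar : ∀ w : Fin n → ℝ, ((∀ j, 0 ≤ w j) ∧ ∑ j, w j = 1) →
      ∃ jo : Fin n, pstar w = μ / (1 - μ) * θ jo ∧
        (∀ l : Fin n, USone n θ μ (μ / (1 - μ) * θ l) w ≤ USone n θ μ (pstar w) w) ∧
        (∀ l : Fin n, USone n θ μ (μ / (1 - μ) * θ l) w = USone n θ μ (pstar w) w →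
          jo ≤ l))
    (σ₀ : Policy n) (hσ₀BP : BP n xstar σ₀) (hσ₀IC : ICpol n θ μ δ ubar pstar σ₀)
    (hσ₀opt : ∀ σ' : Policy n, BP n xstar σ' → ICpol n θ μ δ ubar pstar σ' →
      UPpol n θ μ pstar σ' ≤ UPpol n θ μ pstar σ₀) :
    ∃ σ : Policy n, BP n xstar σ ∧ ICpol n θ μ δ ubar pstar σ ∧
      LTT n θ μ pstar σ ∧
      σ.xT = σ₀.xT ∧ σ.alphaT = σ₀.alphaT ∧
      USpol n θ μ pstar σ = USpol n θ μ pstar σ₀ ∧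
      UPpol n θ μ pstar σ = UPpol n θ μ pstar σ₀ ∧
      (∀ σ' : Policy n, BP n xstar σ' → ICpol n θ μ δ ubar pstar σ' →
        UPpol n θ μ pstar σ' ≤ UPpol n θ μ pstar σ) :=
  stmt16_general n θ μ δ ubar xstar pstar hθpos hθmono hμ0 hμ1 hpstar σ₀ hσ₀BP hσ₀IC hσ₀opt
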